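/- Let m ≥ 0 be an integer, let q > 3 + 2m be a real number, and set α = (q−3−2m)/(q−1) ∈ (0,1). Define u : ℝ → ℝ by u(x) = sign(x)·|x|^α. Then for every x ≠ 0, u is twice differentiable at x with u'(x) = α|x|^{α−1} > 0, and u satisfies the pointwise identity u''(x) = (α−1)·α^{1−q} · x^{2m+1} · (u'(x))^q; equivalently, arctan(u''(x)) = −arctan( (1−α)·α^{1−q} · x^{2m+1} · (u'(x))^q ). -/

import Mathlib

/-!
Away from the origin `u = sign · |·|^α` is smooth with `u' = α |x|^(α-1)` and
`u'' = α (α - 1) sign x |x|^(α-2)`. Writing `x^(2m+1) = sign x · |x|^(2m+1)`, the right-hand side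
`(α - 1) α^(1-q) x^(2m+1) (u')^q` equals `(α - 1) α sign x |x|^(2m+1 + (α-1) q)`, and the choice
`α = (q - 3 - 2m)/(q - 1)` is exactly the exponent balance `2m + 1 + (α - 1) q = α - 2`.
-/

open Real Filter Topology

namespace Real

lemma sign_eventuallyEq_const {x : ℝ} (hx : x ≠ 0) : sign =ᶠ[𝓝 x] fun _ ↦ sign x := by
  rcases hx.lt_or_gt with hx | hx
  · filter_upwards [Iio_mem_nhds hx] with y hy
    rw [sign_of_neg hy, sign_of_neg hx]
  · filter_upwards [Ioi_mem_nhds hx] with y hy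
    rw [sign_of_pos hy, sign_of_pos hx]

lemma hasDerivAt_sign {x : ℝ} (hx : x ≠ 0) : HasDerivAt sign 0 x :=
  (hasDerivAt_const x (sign x)).congr_of_eventuallyEq (sign_eventuallyEq_const hx)

lemma sign_mul_self_of_ne_zero {x : ℝ} (hx : x ≠ 0) : sign x * sign x = 1 := by
  rcases sign_apply_eq_of_ne_zero x hx with h | h <;> rw [h] <;> norm_num

lemma sign_eq_signType_sign (x : ℝ) : sign x = (SignType.sign x : ℝ) := by
  rcases lt_trichotomy x 0 with hx | rfl | hx
  · simp [sign_of_neg hx, hx]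
  · simp
  · simp [sign_of_pos hx, hx]

lemma _root_.Odd.pow_eq_sign_mul_abs_pow {n : ℕ} (hn : Odd n) (x : ℝ) :
    x ^ n = sign x * |x| ^ n := by
  rcases lt_trichotomy x 0 with hx | rfl | hx
  · rw [sign_of_neg hx, abs_of_neg hx, hn.neg_pow]
    ring
  · simp [hn.pos.ne']
  · rw [sign_of_pos hx, abs_of_pos hx, one_mul]

lemma hasDerivAt_abs_rpow_of_ne_zero (p : ℝ) {x : ℝ} (hx : x ≠ 0) :
    HasDerivAt (fun y ↦ |y| ^ p) (sign x * p * |x| ^ (p - 1)) x := by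
  rw [sign_eq_signType_sign]
  exact (hasDerivAt_abs hx).rpow_const (Or.inl (abs_ne_zero.2 hx))

lemma hasDerivAt_sign_mul_abs_rpow (p : ℝ) {x : ℝ} (hx : x ≠ 0) :
    HasDerivAt (fun y ↦ sign y * |y| ^ p) (p * |x| ^ (p - 1)) x := by
  refine ((hasDerivAt_sign hx).mul (hasDerivAt_abs_rpow_of_ne_zero p hx)).congr_deriv ?_
  rw [zero_mul, zero_add, ← mul_assoc, ← mul_assoc, sign_mul_self_of_ne_zero hx, one_mul]

end Real

lemma mul_sign_mul_abs_rpow_eq_of_exponent {α q : ℝ} {n : ℕ} (hα : 0 < α) (hn : Odd n)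
    (hexp : (n : ℝ) + (α - 1) * q = α - 1 - 1) {x : ℝ} (hx : x ≠ 0) :
    α * (sign x * (α - 1) * |x| ^ (α - 1 - 1)) =
      (α - 1) * α ^ (1 - q) * x ^ n * (α * |x| ^ (α - 1)) ^ q := by
  have habs : 0 < |x| := abs_pos.2 hx
  calc α * (sign x * (α - 1) * |x| ^ (α - 1 - 1))
      = (α - 1) * sign x * α ^ (1 - q + q) * |x| ^ ((n : ℝ) + (α - 1) * q) := by
        rw [sub_add_cancel, rpow_one, hexp]; ring
    _ = (α - 1) * α ^ (1 - q) * x ^ n * (α * |x| ^ (α - 1)) ^ q := by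
        rw [rpow_add hα, rpow_add habs, mul_rpow hα.le (rpow_nonneg habs.le _),
          ← rpow_mul habs.le, rpow_natCast, hn.pow_eq_sign_mul_abs_pow x]
        ring

/-- the function u(x) = sign(x)·|x|^α with α = (q−3−2m)/(q−1), q > 3+2m, satisfies
u'' = (α−1)·α^{1−q}·x^{2m+1}·(u')^q away from the origin, equivalently
arctan(u'') = −arctan((1−α)·α^{1−q}·x^{2m+1}·(u')^q). -/
theorem singular_solution_x_power
    (m : ℕ) (q : ℝ) (hq : 3 + 2 * (m : ℝ) < q) (α : ℝ)
    (hα : α = (q - 3 - 2 * m) / (q - 1)) :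
    α ∈ Set.Ioo (0 : ℝ) 1 ∧
    ∀ x : ℝ, x ≠ 0 →
      HasDerivAt (fun y : ℝ => Real.sign y * |y| ^ α) (α * |x| ^ (α - 1)) x ∧
      0 < α * |x| ^ (α - 1) ∧
      (∃ d : ℝ, HasDerivAt (fun y : ℝ => α * |y| ^ (α - 1)) d x ∧
        d = (α - 1) * α ^ (1 - q) * x ^ (2 * m + 1) * (α * |x| ^ (α - 1)) ^ q ∧
        Real.arctan d =
          - Real.arctan ((1 - α) * α ^ (1 - q) * x ^ (2 * m + 1) *
            (α * |x| ^ (α - 1)) ^ q)) := by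
  have hq1 : 0 < q - 1 := by linarith
  have hα0 : 0 < α := hα ▸ div_pos (by linarith) hq1
  have hα1 : α < 1 := by rw [hα, div_lt_one hq1]; linarith
  have hexp : ((2 * m + 1 : ℕ) : ℝ) + (α - 1) * q = α - 1 - 1 := by
    rw [hα]; field_simp; push_cast; ring
  refine ⟨⟨hα0, hα1⟩, fun x hx ↦ ?_⟩
  have hd := mul_sign_mul_abs_rpow_eq_of_exponent hα0 (odd_two_mul_add_one m) hexp hx
  refine ⟨hasDerivAt_sign_mul_abs_rpow α hx, mul_pos hα0 (rpow_pos_of_pos (abs_pos.2 hx) _), _,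
    (hasDerivAt_abs_rpow_of_ne_zero (α - 1) hx).const_mul α, hd, ?_⟩
  rw [hd, ← arctan_neg]
  congr 1
  ring
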